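/- For every integer r ≥ 0 and every polynomial f ∈ F[z_1,…,z_N] symmetric in all N variables: [ Σ_{i=1}^{N−1} D_i^r , D_N ] f = β ( (N−1) D_N^r − Σ_{i=1}^{N−1} D_i^r ) f. -/

import Mathlib

open MvPolynomial Finset

section CSDefs

variable {F : Type*} [Field F] [CharZero F]

/-- Exact division in a polynomial ring: `divExact d f = f / d` when `d ∣ f`, junk otherwise. -/
noncomputable def divExact {σ : Type*} (d f : MvPolynomial σ F) : MvPolynomial σ F := by
  classical exact if h : ∃ c, f = d * c then h.choose else 0

/-- The exchange operator `K_{ij}` permuting the variables `z_i` and `z_j`. -/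
noncomputable def Kswap {N : ℕ} (i j : Fin N) (f : MvPolynomial (Fin N) F) :
    MvPolynomial (Fin N) F :=
  rename (Equiv.swap i j) f

/-- The Dunkl operator `∇_i = ∂_i + β ∑_{j ≠ i} (z_i - z_j)⁻¹ (1 - K_{ij})`. -/
noncomputable def nabla {N : ℕ} (β : F) (i : Fin N) (f : MvPolynomial (Fin N) F) :
    MvPolynomial (Fin N) F :=
  pderiv i f + β • ∑ j ∈ Finset.univ.erase i, divExact (X i - X j) (f - Kswap i j f)

/-- `D_i = z_i ∇_i`. -/
noncomputable def Dop {N : ℕ} (β : F) (i : Fin N) (f : MvPolynomial (Fin N) F) :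
    MvPolynomial (Fin N) F :=
  X i * nabla β i f

/-- `(D_{j₁} + kβ)(D_{j₂} + (k+1)β) ⋯` applied along a list of indices. -/
noncomputable def Dlist {N : ℕ} (β : F) :
    ℕ → List (Fin N) → MvPolynomial (Fin N) F → MvPolynomial (Fin N) F
  | _, [], f => f
  | k, j :: rest, f => Dop β j (Dlist β (k + 1) rest f) + ((k : F) * β) • Dlist β (k + 1) rest f

/-- `D_{k,J} = (D_{j₁} + kβ)(D_{j₂} + (k+1)β) ⋯ (D_{j_ℓ} + (k+ℓ-1)β)` for
`J = {j₁ < j₂ < … < j_ℓ}`. -/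
noncomputable def DJ {N : ℕ} (β : F) (k : ℕ) (J : Finset (Fin N))
    (f : MvPolynomial (Fin N) F) : MvPolynomial (Fin N) F :=
  Dlist β k (J.sort (· ≤ ·)) f

/-- `z_J = ∏_{i ∈ J} z_i`. -/
noncomputable def zJ {N : ℕ} (J : Finset (Fin N)) : MvPolynomial (Fin N) F := ∏ i ∈ J, X i

/-- The creation operator `B⁺_{i,J} = ∑_{J' ⊆ J, |J'| = i} z_{J'} D_{1,J'}`. -/
noncomputable def Bplus {N : ℕ} (β : F) (i : ℕ) (J : Finset (Fin N))
    (f : MvPolynomial (Fin N) F) : MvPolynomial (Fin N) F :=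
  ∑ J' ∈ J.powersetCard i, zJ J' * DJ β 1 J' f

/-- `A_{ij} = ((z_i+z_j)/(z_i-z_j))(z_i ∂_i - z_j ∂_j)`. -/
noncomputable def Aop {N : ℕ} (i j : Fin N) (f : MvPolynomial (Fin N) F) :
    MvPolynomial (Fin N) F :=
  divExact (X i - X j) ((X i + X j) * (X i * pderiv i f - X j * pderiv j f))

/-- `H^{(S)} = ∑_{i ∈ S} (z_i ∂_i)² + β ∑_{i<j, i,j ∈ S} A_{ij}`. -/
noncomputable def Hop {N : ℕ} (β : F) (S : Finset (Fin N)) (f : MvPolynomial (Fin N) F) :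
    MvPolynomial (Fin N) F :=
  ∑ i ∈ S, X i * pderiv i (X i * pderiv i f)
    + β • ∑ i ∈ S, ∑ j ∈ S.filter (fun j => i < j), Aop i j f

/-- A polynomial is symmetric in the variables indexed by `S`. -/
def SymmOn {N : ℕ} (S : Finset (Fin N)) (f : MvPolynomial (Fin N) F) : Prop :=
  ∀ i ∈ S, ∀ j ∈ S, rename (Equiv.swap i j) f = f

/-- `phiCS β N lam i = (B⁺_i)^{λ_i - λ_{i+1}} ⋯ (B⁺_1)^{λ_1 - λ_2} · 1`,
where `lam` is 0-indexed: `lam (j-1) = λ_j`. -/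
noncomputable def phiCS (β : F) (N : ℕ) (lam : ℕ → ℕ) : ℕ → MvPolynomial (Fin N) F
  | 0 => 1
  | i + 1 => (fun f => Bplus β (i + 1) Finset.univ f)^[lam i - lam (i + 1)] (phiCS β N lam i)

/-- The monomial symmetric polynomial attached to an exponent vector. -/
noncomputable def msym (N : ℕ) (lam : Fin N → ℕ) : MvPolynomial (Fin N) F := by
  classical
  exact ∑ v ∈ (Finset.univ : Finset (Equiv.Perm (Fin N))).image
      (fun σ => fun i => lam (σ i)), ∏ i, X i ^ v i

/-- `𝐷̂_i = D_i + β(i-1) - β ∑_{j<i} (1 - K_{ij})` (0-indexed: `i-1` becomes `i`). -/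
noncomputable def Dhat {N : ℕ} (β : F) (i : Fin N) (f : MvPolynomial (Fin N) F) :
    MvPolynomial (Fin N) F :=
  Dop β i f + (β * ((i : ℕ) : F)) • f
    - β • ∑ j ∈ Finset.univ.filter (fun j => j < i), (f - Kswap i j f)

end CSDefs

/-!
The key fact is that the Dunkl operators commute. Their commutator `∇_i ∇_j - ∇_j ∇_i` is
linear, kills constants, and commutes with multiplication by every `z_k`; this follows from
the relations `∇_i z_k = z_k ∇_i - β K_{ik}` (`k ≠ i`),
`∇_i z_i = z_i ∇_i + 1 + β ∑_{l ≠ i} K_{il}` and `K_σ ∇_i = ∇_{σ i} K_σ`. Hence it vanishes.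
The same relations turn this into `D_i D_j - D_j D_i = β (D_j - D_i) K_{ij}`, which iterates to
`D_i^r D_j - D_j D_i^r = β (D_j^r - D_i^r) K_{ij}`. Summing over `i ≠ N` and using
`K_{iN} f = f` gives the claim.
-/

theorem MvPolynomial.X_sub_X_dvd_sub_rename_swap {σ R : Type*} [CommRing R] [DecidableEq σ]
    (i j : σ) (f : MvPolynomial σ R) : X i - X j ∣ f - rename (Equiv.swap i j) f := by
  induction f using MvPolynomial.induction_on with
  | C a => simp
  | add p q hp hq =>
    rw [map_add, add_sub_add_comm]
    exact dvd_add hp hq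
  | mul_X p k hp =>
    have hk : X i - X j ∣ X k - (X (Equiv.swap i j k) : MvPolynomial σ R) := by
      rcases eq_or_ne k i with rfl | hki
      · simp
      rcases eq_or_ne k j with rfl | hkj
      · exact ⟨-1, by simp⟩
      · simp [Equiv.swap_apply_of_ne_of_ne hki hkj]
    have e : p * X k - rename (Equiv.swap i j) (p * X k)
        = (p - rename (Equiv.swap i j) p) * X k
          + rename (Equiv.swap i j) p * (X k - X (Equiv.swap i j k)) := by
      rw [map_mul, rename_X]; ring
    rw [e]
    exact dvd_add (hp.mul_right _) (hk.mul_left _)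

theorem MvPolynomial.X_sub_X_ne_zero {σ R : Type*} [CommRing R] [Nontrivial R] {i j : σ}
    (h : i ≠ j) : (X i - X j : MvPolynomial σ R) ≠ 0 :=
  sub_ne_zero.mpr fun e => h (X_injective e)

section Dunkl

open Equiv

variable {F : Type*} [Field F]

theorem mul_divExact {σ : Type*} {d f : MvPolynomial σ F} (h : d ∣ f) :
    d * divExact d f = f := by
  have h' : ∃ c, f = d * c := h
  rw [divExact, dif_pos h']
  exact h'.choose_spec.symm

variable {N : ℕ} (β : F) (f g p : MvPolynomial (Fin N) F)

-- an arbitrary polynomial when `i = j`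
noncomputable def divDiff (i j : Fin N) (f : MvPolynomial (Fin N) F) : MvPolynomial (Fin N) F :=
  divExact (X i - X j) (f - Kswap i j f)

theorem nabla_eq (i : Fin N) :
    nabla β i f = pderiv i f + β • ∑ j ∈ univ.erase i, divDiff i j f := rfl

theorem X_sub_X_mul_divDiff (i j : Fin N) :
    (X i - X j) * divDiff i j f = f - Kswap i j f :=
  mul_divExact (X_sub_X_dvd_sub_rename_swap i j f)

theorem divDiff_eq_of_mul_eq {i j : Fin N} (hij : i ≠ j) {f g : MvPolynomial (Fin N) F}
    (h : (X i - X j) * g = f - Kswap i j f) : divDiff i j f = g :=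
  mul_left_cancel₀ (X_sub_X_ne_zero hij) ((X_sub_X_mul_divDiff f i j).trans h.symm)

theorem divDiff_add {i j : Fin N} (hij : i ≠ j) :
    divDiff i j (f + g) = divDiff i j f + divDiff i j g := by
  refine divDiff_eq_of_mul_eq hij ?_
  rw [mul_add, X_sub_X_mul_divDiff, X_sub_X_mul_divDiff, Kswap, Kswap, Kswap, map_add]
  ring

theorem divDiff_smul {i j : Fin N} (hij : i ≠ j) (c : F) :
    divDiff i j (c • f) = c • divDiff i j f := by
  refine divDiff_eq_of_mul_eq hij ?_
  rw [mul_smul_comm, X_sub_X_mul_divDiff, Kswap, Kswap, map_smul, smul_sub]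

theorem divDiff_X_mul_of_ne {i j k : Fin N} (hij : i ≠ j) (hki : k ≠ i) (hkj : k ≠ j) :
    divDiff i j (X k * f) = X k * divDiff i j f := by
  refine divDiff_eq_of_mul_eq hij ?_
  rw [mul_left_comm, X_sub_X_mul_divDiff, Kswap, Kswap, map_mul, rename_X,
    swap_apply_of_ne_of_ne hki hkj]
  ring

theorem divDiff_X_left_mul {i j : Fin N} (hij : i ≠ j) :
    divDiff i j (X i * f) = X i * divDiff i j f + Kswap i j f := by
  refine divDiff_eq_of_mul_eq hij ?_
  rw [mul_add, mul_left_comm, X_sub_X_mul_divDiff, Kswap, Kswap, map_mul, rename_X,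
    swap_apply_left]
  ring

theorem divDiff_X_right_mul {i j : Fin N} (hij : i ≠ j) :
    divDiff i j (X j * f) = X j * divDiff i j f - Kswap i j f := by
  refine divDiff_eq_of_mul_eq hij ?_
  rw [mul_sub, mul_left_comm, X_sub_X_mul_divDiff, Kswap, Kswap, map_mul, rename_X,
    swap_apply_right]
  ring

theorem rename_divDiff (σ : Perm (Fin N)) {i j : Fin N} (hij : i ≠ j) :
    rename σ (divDiff i j f) = divDiff (σ i) (σ j) (rename σ f) := by
  refine (divDiff_eq_of_mul_eq (σ.injective.ne hij) ?_).symm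
  rw [← rename_X σ, ← rename_X σ, ← map_sub, ← map_mul, X_sub_X_mul_divDiff, Kswap, Kswap,
    map_sub, rename_rename, rename_rename, ← Perm.coe_mul, ← Perm.coe_mul,
    mul_swap_eq_swap_mul]

theorem nabla_add (i : Fin N) : nabla β i (f + g) = nabla β i f + nabla β i g := by
  have h : ∑ j ∈ univ.erase i, divDiff i j (f + g)
      = ∑ j ∈ univ.erase i, divDiff i j f + ∑ j ∈ univ.erase i, divDiff i j g := by
    rw [← sum_add_distrib]
    exact sum_congr rfl fun j hj => divDiff_add f g (ne_of_mem_erase hj).symm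
  rw [nabla_eq, nabla_eq, nabla_eq, map_add, h, smul_add]
  abel

theorem nabla_smul (i : Fin N) (c : F) : nabla β i (c • f) = c • nabla β i f := by
  have h : ∑ j ∈ univ.erase i, divDiff i j (c • f) = c • ∑ j ∈ univ.erase i, divDiff i j f := by
    rw [smul_sum]
    exact sum_congr rfl fun j hj => divDiff_smul f (ne_of_mem_erase hj).symm c
  rw [nabla_eq, nabla_eq, Derivation.map_smul, h, smul_add, smul_comm β c]

noncomputable def nablaₗ (i : Fin N) : MvPolynomial (Fin N) F →ₗ[F] MvPolynomial (Fin N) F where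
  toFun := nabla β i
  map_add' f g := nabla_add β f g i
  map_smul' c f := nabla_smul β f i c

noncomputable def Dopₗ (i : Fin N) : MvPolynomial (Fin N) F →ₗ[F] MvPolynomial (Fin N) F :=
  LinearMap.mulLeft F (X i) ∘ₗ nablaₗ β i

theorem nabla_zero (i : Fin N) : nabla β i (0 : MvPolynomial (Fin N) F) = 0 :=
  map_zero (nablaₗ β i)

theorem nabla_sub (i : Fin N) : nabla β i (f - g) = nabla β i f - nabla β i g :=
  map_sub (nablaₗ β i) f g

theorem nabla_sum (i : Fin N) {ι : Type*} (s : Finset ι) (φ : ι → MvPolynomial (Fin N) F) :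
    nabla β i (∑ x ∈ s, φ x) = ∑ x ∈ s, nabla β i (φ x) :=
  map_sum (nablaₗ β i) φ s

theorem Dop_add (i : Fin N) : Dop β i (f + g) = Dop β i f + Dop β i g :=
  map_add (Dopₗ β i) f g

theorem Dop_sub (i : Fin N) : Dop β i (f - g) = Dop β i f - Dop β i g :=
  map_sub (Dopₗ β i) f g

theorem Dop_smul (i : Fin N) (c : F) : Dop β i (c • f) = c • Dop β i f :=
  map_smul (Dopₗ β i) c f

theorem Dop_sum (i : Fin N) {ι : Type*} (s : Finset ι) (φ : ι → MvPolynomial (Fin N) F) :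
    Dop β i (∑ x ∈ s, φ x) = ∑ x ∈ s, Dop β i (φ x) :=
  map_sum (Dopₗ β i) φ s

theorem nabla_C (i : Fin N) (a : F) : nabla β i (C a) = 0 := by
  have h : ∀ j ∈ univ.erase i, divDiff i j (C a : MvPolynomial (Fin N) F) = 0 := fun j hj =>
    divDiff_eq_of_mul_eq (ne_of_mem_erase hj).symm (by rw [Kswap, rename_C, sub_self, mul_zero])
  rw [nabla_eq, pderiv_C, sum_eq_zero h, smul_zero, add_zero]

theorem rename_nabla (σ : Perm (Fin N)) (i : Fin N) :
    rename σ (nabla β i f) = nabla β (σ i) (rename σ f) := by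
  have h : univ.erase (σ i) = (univ.erase i).map σ.toEmbedding := by
    rw [map_erase, map_univ_equiv]; rfl
  rw [nabla_eq, nabla_eq, map_add, map_smul, map_sum, pderiv_rename σ.injective, h, sum_map]
  congr 2
  exact sum_congr rfl fun j hj => rename_divDiff f σ (ne_of_mem_erase hj).symm

theorem nabla_Kswap (a b c : Fin N) :
    nabla β c (Kswap a b f) = Kswap a b (nabla β (swap a b c) f) := by
  rw [Kswap, Kswap, rename_nabla, swap_apply_self]

theorem Kswap_comm (a b : Fin N) : Kswap a b f = Kswap b a f := by
  rw [Kswap, Kswap, swap_comm]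

theorem nabla_X_mul_of_ne {i k : Fin N} (hki : k ≠ i) :
    nabla β i (X k * f) = X k * nabla β i f - β • Kswap i k f := by
  have hk : k ∈ univ.erase i := mem_erase.mpr ⟨hki, mem_univ k⟩
  have h : ∑ j ∈ univ.erase i, divDiff i j (X k * f)
      = X k * ∑ j ∈ univ.erase i, divDiff i j f - Kswap i k f := by
    rw [← add_sum_erase _ _ hk, ← add_sum_erase _ _ hk, divDiff_X_right_mul f hki.symm, mul_add,
      sum_congr rfl fun j hj => divDiff_X_mul_of_ne f (ne_of_mem_erase (mem_of_mem_erase hj)).symm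
        hki (ne_of_mem_erase hj).symm, mul_sum]
    ring
  rw [nabla_eq, nabla_eq, pderiv_mul, pderiv_X_of_ne hki, h, smul_sub, mul_add, mul_smul_comm]
  ring

theorem nabla_X_mul_self (i : Fin N) :
    nabla β i (X i * f) = X i * nabla β i f + f + β • ∑ l ∈ univ.erase i, Kswap i l f := by
  have h : ∑ j ∈ univ.erase i, divDiff i j (X i * f)
      = X i * ∑ j ∈ univ.erase i, divDiff i j f + ∑ l ∈ univ.erase i, Kswap i l f := by
    rw [mul_sum, ← sum_add_distrib]
    exact sum_congr rfl fun j hj => divDiff_X_left_mul f (ne_of_mem_erase hj).symm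
  rw [nabla_eq, nabla_eq, pderiv_mul, pderiv_X_self, h, smul_add, mul_add, mul_smul_comm]
  ring

theorem nabla_comm_X_mul_of_ne {i j k : Fin N} (hij : i ≠ j) (hki : k ≠ i) (hkj : k ≠ j) :
    nabla β i (nabla β j (X k * p)) - nabla β j (nabla β i (X k * p))
      = X k * (nabla β i (nabla β j p) - nabla β j (nabla β i p)) := by
  have hi : nabla β i (Kswap j k p) = Kswap j k (nabla β i p) := by
    rw [nabla_Kswap, swap_apply_of_ne_of_ne hij hki.symm]
  have hj : nabla β j (Kswap i k p) = Kswap i k (nabla β j p) := by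
    rw [nabla_Kswap, swap_apply_of_ne_of_ne hij.symm hkj.symm]
  rw [nabla_X_mul_of_ne β p hkj, nabla_X_mul_of_ne β p hki, nabla_sub, nabla_sub, nabla_smul,
    nabla_smul, nabla_X_mul_of_ne β _ hki, nabla_X_mul_of_ne β _ hkj, hi, hj]
  ring

theorem nabla_comm_X_mul_self {i j : Fin N} (hij : i ≠ j) :
    nabla β i (nabla β j (X i * p)) - nabla β j (nabla β i (X i * p))
      = X i * (nabla β i (nabla β j p) - nabla β j (nabla β i p)) := by
  have hi : nabla β i (Kswap j i p) = Kswap i j (nabla β j p) := by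
    rw [nabla_Kswap, swap_apply_right, Kswap_comm]
  -- only the term `l = j` survives: for `l ≠ i, j` the swap `(i l)` fixes `j`
  have hsum : ∑ l ∈ univ.erase i, nabla β j (Kswap i l p)
      = ∑ l ∈ univ.erase i, Kswap i l (nabla β j p)
        + (Kswap i j (nabla β i p) - Kswap i j (nabla β j p)) := by
    rw [← sub_eq_iff_eq_add', ← sum_sub_distrib, sum_eq_single_of_mem j
      (mem_erase.mpr ⟨hij.symm, mem_univ j⟩), nabla_Kswap, swap_apply_right]
    intro l hl hlj
    rw [nabla_Kswap, swap_apply_of_ne_of_ne hij.symm hlj.symm, sub_self]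
  rw [nabla_X_mul_of_ne β p hij, nabla_X_mul_self, nabla_sub, nabla_smul, nabla_X_mul_self, hi,
    nabla_add, nabla_add, nabla_smul, nabla_sum, hsum, nabla_X_mul_of_ne β _ hij, Kswap_comm _ j i,
    mul_sub]
  module

theorem nabla_comm_X_mul {i j : Fin N} (hij : i ≠ j) (k : Fin N) :
    nabla β i (nabla β j (X k * p)) - nabla β j (nabla β i (X k * p))
      = X k * (nabla β i (nabla β j p) - nabla β j (nabla β i p)) := by
  rcases eq_or_ne k i with rfl | hki
  · exact nabla_comm_X_mul_self β p hij
  rcases eq_or_ne k j with rfl | hkj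
  · linear_combination -nabla_comm_X_mul_self β p hij.symm
  · exact nabla_comm_X_mul_of_ne β p hij hki hkj

theorem nabla_comm (i j : Fin N) : nabla β i (nabla β j p) = nabla β j (nabla β i p) := by
  rcases eq_or_ne i j with rfl | hij
  · rfl
  induction p using MvPolynomial.induction_on with
  | C a => rw [nabla_C, nabla_C, nabla_zero, nabla_zero]
  | add p q hp hq => rw [nabla_add, nabla_add, nabla_add, nabla_add, hp, hq]
  | mul_X p k hp =>
    rw [mul_comm, ← sub_eq_zero, nabla_comm_X_mul β p hij, hp, sub_self, mul_zero]

theorem Kswap_Dop (a b c : Fin N) : Kswap a b (Dop β c f) = Dop β (swap a b c) (Kswap a b f) := by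
  rw [Dop, Dop, Kswap, Kswap, map_mul, rename_X, rename_nabla]

theorem Kswap_Dop_iterate (a b c : Fin N) (r : ℕ) :
    Kswap a b ((Dop β c)^[r] f) = (Dop β (swap a b c))^[r] (Kswap a b f) :=
  Function.Semiconj.iterate_right (fun f => Kswap_Dop β f a b c) r f

theorem Dop_comm {i j : Fin N} (hij : i ≠ j) :
    Dop β i (Dop β j f) - Dop β j (Dop β i f)
      = β • (Dop β j (Kswap i j f) - Dop β i (Kswap i j f)) := by
  have hi : nabla β i (Kswap i j f) = Kswap i j (nabla β j f) := by
    rw [nabla_Kswap, swap_apply_left]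
  have hj : nabla β j (Kswap i j f) = Kswap i j (nabla β i f) := by
    rw [nabla_Kswap, swap_apply_right]
  simp only [Dop]
  rw [nabla_X_mul_of_ne β _ hij.symm, nabla_X_mul_of_ne β _ hij, hi, hj, Kswap_comm _ j i,
    nabla_comm β f i j]
  simp only [mul_sub, mul_smul_comm, smul_sub]
  ring

theorem Dop_iterate_comm {i j : Fin N} (hij : i ≠ j) (r : ℕ) :
    (Dop β i)^[r] (Dop β j f) - Dop β j ((Dop β i)^[r] f)
      = β • ((Dop β j)^[r] (Kswap i j f) - (Dop β i)^[r] (Kswap i j f)) := by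
  induction r with
  | zero => simp
  | succ r ih =>
    have hK : Kswap i j ((Dop β i)^[r] f) = (Dop β j)^[r] (Kswap i j f) := by
      rw [Kswap_Dop_iterate, swap_apply_left]
    have hcomm := Dop_comm β ((Dop β i)^[r] f) hij
    rw [hK] at hcomm
    simp only [Function.iterate_succ_apply']
    rw [eq_add_of_sub_eq' ih, Dop_add, Dop_smul, Dop_sub]
    linear_combination (norm := module) hcomm

theorem sum_Dop_iterate_comm (hf : f.IsSymmetric) (r : ℕ) {s : Finset (Fin N)} {j : Fin N}
    (hj : j ∉ s) :
    ∑ i ∈ s, (Dop β i)^[r] (Dop β j f) - Dop β j (∑ i ∈ s, (Dop β i)^[r] f)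
      = β • (#s • (Dop β j)^[r] f - ∑ i ∈ s, (Dop β i)^[r] f) := by
  rw [Dop_sum, ← sum_sub_distrib, sum_congr rfl fun i hi => by
    rw [Dop_iterate_comm β f (ne_of_mem_of_not_mem hi hj) r, Kswap, hf], ← smul_sum,
    sum_sub_distrib, sum_const]

end Dunkl

/-- for every `r ≥ 0` and symmetric `f`,
`[∑_{i=1}^{N-1} D_i^r, D_N] f = β ((N-1) D_N^r - ∑_{i=1}^{N-1} D_i^r) f`.
(0-indexed: `D_N` is `Dop β ⟨N-1,_⟩` and the sum is over `x < N-1`.) -/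
theorem statement_14 {F : Type*} [Field F] {N : ℕ} (hN : 0 < N) (β : F)
    (r : ℕ) (f : MvPolynomial (Fin N) F) (hf : f.IsSymmetric) :
    (∑ i ∈ Finset.univ.filter (fun x : Fin N => (x : ℕ) < N - 1),
        (Dop β i)^[r] (Dop β (⟨N - 1, by omega⟩ : Fin N) f))
      - Dop β (⟨N - 1, by omega⟩ : Fin N)
          (∑ i ∈ Finset.univ.filter (fun x : Fin N => (x : ℕ) < N - 1), (Dop β i)^[r] f)
    = β • (((N - 1 : ℕ) : F) • (Dop β (⟨N - 1, by omega⟩ : Fin N))^[r] f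
        - ∑ i ∈ Finset.univ.filter (fun x : Fin N => (x : ℕ) < N - 1), (Dop β i)^[r] f) := by
  have hcard : #{x : Fin N | (x : ℕ) < N - 1} = N - 1 := by
    rw [Fin.card_filter_val_lt]
    omega
  rw [sum_Dop_iterate_comm β f hf r (by simp), hcard, Nat.cast_smul_eq_nsmul]
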